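/- (Vector representation of K_U.) Let ε > 0, let x_1 < ... < x_N and y_1 < ... < y_N be strictly increasing real tuples with dividing index ζ (with the convention ζ(N+1) = N), and let K_U = [k̂_{ij}] be the upper block of the kernel matrix. Define the ratios r'_t = exp(-(x_{t+1} - x_t)/ε) for t = 1, ..., N-1. Then for all indices 1 ≤ i ≤ s ≤ N and all j with ζ(s) < j ≤ ζ(s+1), one has k̂_{ij} = (∏_{t=i}^{s-1} r'_t) · exp(-(y_j - x_s)/ε). Consequently K_U is completely determined by the ratio vector (r'_1, ..., r'_{N-1}) together with the block-edge vectors η'_i = (k̂_{i, ζ(i)+1}, ..., k̂_{i, ζ(i+1)}) for i = 1, ..., N. -/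

import Mathlib

/-!
Since every `x s` with `s ≥ i` lies to the right of `x i`, the column `j` of a block beyond `ζ s`
satisfies `x i ≤ x s < y j`; hence `k̂ i j = exp (-(y j - x i)/ε)`, and splitting
`y j - x i = (y j - x s) + ∑_{t=i}^{s-1} (x (t+1) - x t)` gives the product of ratios.
-/

open Finset

theorem strictMonoOn_Icc_one_of_lt {f : ℕ → ℝ} {N : ℕ}
    (hf : ∀ i j, 1 ≤ i → i < j → j ≤ N → f i < f j) : StrictMonoOn f (Set.Icc 1 N) :=
  fun i hi j hj hij => hf i j hi.1 hij hj.2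

theorem prod_Ico_exp_neg_sub_div (x : ℕ → ℝ) (ε : ℝ) {i m : ℕ} (him : i ≤ m) :
    ∏ t ∈ Ico i m, Real.exp (-(x (t + 1) - x t) / ε) = Real.exp (-(x m - x i) / ε) := by
  rw [← Real.exp_sum, ← sum_div, sum_neg_distrib, sum_Ico_sub x him]

def IsDividingIndex (y : ℕ → ℝ) (N : ℕ) (a : ℝ) (k : ℕ) : Prop :=
  (a < y 1 → k = 0) ∧
  (y N ≤ a → k = N) ∧
  (y 1 ≤ a → a < y N → (1 ≤ k ∧ k + 1 ≤ N) ∧ y k ≤ a ∧ a < y (k + 1))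

namespace IsDividingIndex

variable {y : ℕ → ℝ} {N : ℕ} {a : ℝ} {k : ℕ}

theorem le (h : IsDividingIndex y N a k) : k ≤ N := by
  obtain ⟨hlow, hhigh, hmid⟩ := h
  by_cases h1 : a < y 1
  · simp [hlow h1]
  by_cases hN : y N ≤ a
  · exact (hhigh hN).le
  · have := (hmid (not_lt.1 h1) (not_le.1 hN)).1.2
    omega

theorem le_iff (h : IsDividingIndex y N a k) (hy : StrictMonoOn y (Set.Icc 1 N)) {j : ℕ}
    (hj : j ∈ Set.Icc 1 N) : j ≤ k ↔ y j ≤ a := by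
  obtain ⟨hlow, hhigh, hmid⟩ := h
  have h1 : (1 : ℕ) ∈ Set.Icc 1 N := ⟨le_rfl, hj.1.trans hj.2⟩
  have hN : N ∈ Set.Icc 1 N := ⟨hj.1.trans hj.2, le_rfl⟩
  by_cases ha1 : a < y 1
  · rw [hlow ha1]
    exact ⟨fun hj0 => absurd hj.1 (by omega),
      fun hja => absurd ((hy.monotoneOn h1 hj hj.1).trans hja) (not_le.2 ha1)⟩
  by_cases haN : y N ≤ a
  · exact ⟨fun _ => (hy.monotoneOn hj hN hj.2).trans haN, fun _ => hhigh haN ▸ hj.2⟩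
  obtain ⟨⟨hk1, hkN⟩, hyk, hyk1⟩ := hmid (not_lt.1 ha1) (not_le.1 haN)
  constructor
  · exact fun hjk => (hy.monotoneOn hj ⟨hk1, by omega⟩ hjk).trans hyk
  · intro hja
    by_contra hkj
    exact not_lt.2 ((hy.monotoneOn ⟨by omega, hkN⟩ hj (by omega)).trans hja) hyk1

end IsDividingIndex

theorem upper_block_vector_representation_general
    (N : ℕ) (ε : ℝ) (x y : ℕ → ℝ)
    (hx : ∀ i j, 1 ≤ i → i < j → j ≤ N → x i < x j)
    (hy : ∀ i j, 1 ≤ i → i < j → j ≤ N → y i < y j)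
    (ζ : ℕ → ℕ) (hζN1 : ζ (N + 1) = N)
    (hζ : ∀ i, 1 ≤ i → i ≤ N →
      (x i < y 1 → ζ i = 0) ∧
      (y N ≤ x i → ζ i = N) ∧
      (y 1 ≤ x i → x i < y N →
        (1 ≤ ζ i ∧ ζ i + 1 ≤ N) ∧ y (ζ i) ≤ x i ∧ x i < y (ζ i + 1)))
    (KU : ℕ → ℕ → ℝ)
    (hKU : ∀ i j, KU i j = if j ≤ ζ i then 0 else Real.exp (-|x i - y j| / ε))
    (r' : ℕ → ℝ)
    (hr' : ∀ t, 1 ≤ t → t ≤ N - 1 → r' t = Real.exp (-(x (t + 1) - x t) / ε)) :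
    ∀ i s j, 1 ≤ i → i ≤ s → s ≤ N → ζ s < j → j ≤ ζ (s + 1) →
      KU i j = (∏ t ∈ Finset.Ico i s, r' t) * Real.exp (-(y j - x s) / ε) := by
  intro i s j hi his hsN hζs hjζ
  have hζ' : ∀ k, 1 ≤ k → k ≤ N → IsDividingIndex y N (x k) (ζ k) := hζ
  have hymono := strictMonoOn_Icc_one_of_lt hy
  have hjN : j ≤ N := by
    rcases hsN.lt_or_eq with hsN | rfl
    · exact hjζ.trans (hζ' (s + 1) (by omega) hsN).le
    · rwa [hζN1] at hjζ
  have hj : j ∈ Set.Icc 1 N := ⟨by omega, hjN⟩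
  have hxs : x s < y j :=
    not_le.1 fun hle => hζs.not_ge (((hζ' s (hi.trans his) hsN).le_iff hymono hj).2 hle)
  have hxi : x i < y j :=
    ((strictMonoOn_Icc_one_of_lt hx).monotoneOn ⟨hi, his.trans hsN⟩ ⟨hi.trans his, hsN⟩
      his).trans_lt hxs
  have hζi : ¬ j ≤ ζ i := fun hle =>
    hxi.not_ge (((hζ' i hi (his.trans hsN)).le_iff hymono hj).1 hle)
  have hratios : ∏ t ∈ Ico i s, r' t = ∏ t ∈ Ico i s, Real.exp (-(x (t + 1) - x t) / ε) :=
    prod_congr rfl fun t ht => by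
      have := mem_Ico.1 ht
      exact hr' t (by omega) (by omega)
  rw [hKU, if_neg hζi, abs_of_neg (sub_neg.2 hxi), hratios, prod_Ico_exp_neg_sub_div x ε his,
    ← Real.exp_add]
  congr 1
  ring

/-- Vector representation of `K_U`: with the dividing index `ζ`
(convention `ζ (N+1) = N`, 1-based indexing) and ratios
`r' t = exp(-(x (t+1) - x t)/ε)`, every entry of the upper block with
`1 ≤ i ≤ s ≤ N` and `ζ s < j ≤ ζ (s+1)` satisfies
`KU i j = (∏_{t=i}^{s-1} r' t) * exp(-(y j - x s)/ε)`, so that `K_U` is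
completely determined by the ratio vector and the block-edge vectors. -/
theorem upper_block_vector_representation
    (N : ℕ) (ε : ℝ) (hε : 0 < ε) (x y : ℕ → ℝ)
    (hx : ∀ i j, 1 ≤ i → i < j → j ≤ N → x i < x j)
    (hy : ∀ i j, 1 ≤ i → i < j → j ≤ N → y i < y j)
    (ζ : ℕ → ℕ) (hζN1 : ζ (N + 1) = N)
    (hζ : ∀ i, 1 ≤ i → i ≤ N →
      (x i < y 1 → ζ i = 0) ∧
      (y N ≤ x i → ζ i = N) ∧
      (y 1 ≤ x i → x i < y N →
        (1 ≤ ζ i ∧ ζ i + 1 ≤ N) ∧ y (ζ i) ≤ x i ∧ x i < y (ζ i + 1)))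
    (KU : ℕ → ℕ → ℝ)
    (hKU : ∀ i j, KU i j = if j ≤ ζ i then 0 else Real.exp (-|x i - y j| / ε))
    (r' : ℕ → ℝ)
    (hr' : ∀ t, 1 ≤ t → t ≤ N - 1 → r' t = Real.exp (-(x (t + 1) - x t) / ε)) :
    ∀ i s j, 1 ≤ i → i ≤ s → s ≤ N → ζ s < j → j ≤ ζ (s + 1) →
      KU i j = (∏ t ∈ Finset.Ico i s, r' t) * Real.exp (-(y j - x s) / ε) :=
  upper_block_vector_representation_general N ε x y hx hy ζ hζN1 hζ KU hKU r' hr'
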